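/- arXiv:1403.5798 — 2 statements merged into one kernel-verified Lean document; each statement's English description precedes it below -/
import Mathlib

section
/- Let γ₊ ≥ 0, β > 0 satisfy 2/β > γ₊, and a > 0 with a/β > 2. The Robin-decoupled transversal operator T⁻ acting as f ↦ -f'' on H²((-a,a) \ {0}) with boundary conditions f'(±a) = ∓γ₊ f(±a) and f'(0⁻) = f'(0⁺) = -β⁻¹(f(0⁺) - f(0⁻)) + (γ/2)(f(0⁺) + f(0⁻)) has, for β sufficiently small, its negative eigenvalue t₋ bounded below: t₋ ≥ -4/β² - (16/β²)·exp(-4a/β). -/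
open Real

private lemma key_poly_ineq (ρ u ε : ℝ) (hρ : 0 < ρ) (hu : 0 < u) (hε : 0 < ε)
    (hε1 : ε ≤ 1/2) (huε : u ≤ ε) (f1 : ρ*(1-u) ≤ 2*u) (f2 : u*(1+8*ρ) ≤ ε) :
    2*ρ + ρ^2 ≤ 4*ε := by
  have hu2 : u ≤ 1/2 := le_trans huε hε1
  have h_a : ρ ≤ 4*u := by
    have : ρ*u ≤ ρ*(1/2) := mul_le_mul_of_nonneg_left hu2 hρ.le
    linarith
  rcases le_or_gt ρ (5/4*ε) with hc2 | hc2
  · have h1 : ρ^2 ≤ (5/4*ε)^2 := by nlinarith [hρ.le]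
    nlinarith [hε, hε1]
  · have h_b : ρ*u ≤ 4*(u*u) := by
      have := mul_le_mul_of_nonneg_right h_a hu.le
      linarith
    have h_c : ρ ≤ 2*u + 4*(u*u) := by linarith
    have h_d : ρ ≤ 2*u + 4*(u*ε) := by
      have : u*u ≤ u*ε := mul_le_mul_of_nonneg_left huε hu.le
      linarith
    have e2 : u*ε ≤ ε*ε := mul_le_mul_of_nonneg_right huε hε.le
    have h_f : ρ*(ρ/4) ≤ ρ*u := by
      have : ρ/4 ≤ u := by linarith
      exact mul_le_mul_of_nonneg_left this hρ.le
    have i3 : ρ ≤ 2*ε + 4*(ε*ε) - 4*ρ^2 := by nlinarith [f2, h_d, e2, h_f]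
    have h1 : (5/4*ε)^2 ≤ ρ^2 := by nlinarith [hε.le, hc2.le]
    nlinarith [i3, h1]

/-- Lower bound on the negative eigenvalue of the Robin-decoupled transversal
operator `T⁻`: any negative eigenvalue `-k²`, whose eigenfunction
`f(u) = A cosh(ku) + B sinh(ku)` on `(0,a)`, `f(u) = C cosh(ku) + D sinh(ku)` on
`(-a,0)` satisfies the Robin conditions `f'(±a) = ∓γ₊ f(±a)` and the δ'-type
conditions at `0`, obeys `-k² ≥ -4/β² - (16/β²) e^{-4a/β}` for all sufficiently
small `β > 0`. -/
theorem robin_transversal_lower_bound (γplus : ℝ) (hγplus : 0 ≤ γplus) :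
    ∃ β₀ : ℝ, 0 < β₀ ∧ ∀ β a γ k A B C D : ℝ,
      0 < β → β < β₀ → 0 < a → a / β > 2 → 2 / β > γplus → |γ| ≤ γplus →
      0 < k →
      ¬(A = 0 ∧ B = 0 ∧ C = 0 ∧ D = 0) →
      -- Robin condition at u = a : f'(a) = -γ₊ f(a)
      k * (A * Real.sinh (k*a) + B * Real.cosh (k*a)) =
        -γplus * (A * Real.cosh (k*a) + B * Real.sinh (k*a)) →
      -- Robin condition at u = -a : f'(-a) = γ₊ f(-a)
      k * (-C * Real.sinh (k*a) + D * Real.cosh (k*a)) =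
        γplus * (C * Real.cosh (k*a) - D * Real.sinh (k*a)) →
      -- f'(0⁻) = f'(0⁺)
      k * D = k * B →
      -- f'(0⁺) = -β⁻¹ (f(0⁺) - f(0⁻)) + (γ/2)(f(0⁺) + f(0⁻))
      k * B = -β⁻¹ * (A - C) + (γ/2) * (A + C) →
      -k^2 ≥ -4/β^2 - (16/β^2) * Real.exp (-4 * a / β) := by
  refine ⟨1, one_pos, ?_⟩
  intro β a γ k A B C D hβ hββ₀ ha hab hγβ hγ hk hnt h1 h2 h3 h4
  have hβ' : β ≠ 0 := ne_of_gt hβ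
  set g := γplus with hg_def
  set s := Real.sinh (k*a) with hs_def
  set c := Real.cosh (k*a) with hc_def
  have hx : 0 < k*a := mul_pos hk ha
  have hs : 0 < s := hs_def ▸ Real.sinh_pos_iff.mpr hx
  have hc : 0 < c := hc_def ▸ Real.cosh_pos (k*a)
  clear_value s c
  have hks : 0 < k*s + g*c :=
    add_pos_of_pos_of_nonneg (mul_pos hk hs) (mul_nonneg hγplus hc.le)
  -- D = B
  have hD : D = B := mul_left_cancel₀ (ne_of_gt hk) h3
  have hA : A*(k*s+g*c) = -(B*(k*c+g*s)) := by linear_combination h1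
  have hC : C*(k*s+g*c) = B*(k*c+g*s) := by
    linear_combination -h2 + (k*c+g*s)*hD
  have hB : B ≠ 0 := by
    intro hB0
    simp only [hB0, zero_mul, mul_zero, neg_zero] at hA hC
    exact hnt ⟨(mul_eq_zero.mp hA).resolve_right (ne_of_gt hks),
               hB0, (mul_eq_zero.mp hC).resolve_right (ne_of_gt hks), hD.trans hB0⟩
  -- secular equation
  have h4' : k*B*β = -(A - C) + (γ/2)*(A + C)*β := by
    rw [h4]; field_simp
  have hBsec : k*β*(k*s+g*c)*B = 2*(k*c+g*s)*B := by
    linear_combination (k*s+g*c)*h4' + (-1 + β*γ/2)*hA + (1 + β*γ/2)*hC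
  have hsec : k*β*(k*s+g*c) = 2*(k*c+g*s) := mul_right_cancel₀ hB hBsec
  -- analysis
  set ε := Real.exp (-4 * a / β) with hε_def
  have hεpos : 0 < ε := hε_def ▸ Real.exp_pos _
  clear_value ε
  have hβ2 : (0:ℝ) < β^2 := by positivity
  have hε1 : ε ≤ 1/2 := by
    have h1 : -4 * a / β ≤ -1 := by
      have : 4*(a/β) > 8 := by linarith
      have : -4 * a / β = -(4*(a/β)) := by ring
      linarith [this]
    have h2 : ε ≤ Real.exp (-1) := by
      rw [hε_def]; exact Real.exp_le_exp.mpr h1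
    have h3 : Real.exp (-1) ≤ 1/2 := by
      rw [Real.exp_neg]
      rw [inv_le_comm₀ (Real.exp_pos 1) (by norm_num)]
      have := Real.add_one_le_exp (1:ℝ)
      linarith
    linarith
  rcases le_or_gt (k*β) 2 with hcase | hcase
  · -- k ≤ 2/β : easy
    have hk2 : k^2*β^2 ≤ 4 := by nlinarith [mul_pos hk hβ]
    have h1 : k^2 ≤ 4/β^2 := by rw [le_div_iff₀ hβ2]; linarith
    have h2 : 0 ≤ 16/β^2 * ε := by positivity
    ring_nf at h1 h2 ⊢
    linarith
  · set ρ := k*β/2 - 1 with hρ_def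
    have hρ : 0 < ρ := by rw [hρ_def]; linarith
    clear_value ρ
    have hexp : c - s = Real.exp (-(k*a)) := by
      rw [hs_def, hc_def]; exact Real.cosh_sub_sinh (k*a)
    have hepos : 0 < Real.exp (-(k*a)) := Real.exp_pos _
    have hrel : ρ*(k*s+g*c) = (k-g)*Real.exp (-(k*a)) := by
      rw [← hexp]; linear_combination (1/2)*hsec + (k*s+g*c)*hρ_def
    have hρs : ρ * s ≤ Real.exp (-(k*a)) := by
      have t1 : 0 ≤ g*Real.exp (-(k*a)) := mul_nonneg hγplus hepos.le
      have t2 : 0 ≤ ρ*(g*c) := mul_nonneg hρ.le (mul_nonneg hγplus hc.le)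
      have h1' : k*(ρ*s) ≤ k*Real.exp (-(k*a)) := by linarith [hrel, t1, t2]
      exact le_of_mul_le_mul_left h1' hk
    set u := Real.exp (-(2*(k*a))) with hu_def
    have hupos : 0 < u := hu_def ▸ Real.exp_pos _
    clear_value u
    have hu : Real.exp (-(k*a))^2 = u := by
      rw [hu_def, sq, ← Real.exp_add]; ring_nf
    have hmulone : Real.exp (k*a) * Real.exp (-(k*a)) = 1 := by
      rw [← Real.exp_add]; simp
    have hse : s * Real.exp (-(k*a)) = (1-u)/2 := by
      rw [hs_def, Real.sinh_eq, ← hu]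
      linear_combination (1/2)*hmulone
    have f1 : ρ*(1-u) ≤ 2*u := by
      have h1' : ρ*(s*Real.exp (-(k*a))) ≤ Real.exp (-(k*a))^2 := by
        calc ρ*(s*Real.exp (-(k*a))) = (ρ*s)*Real.exp (-(k*a)) := by ring
        _ ≤ Real.exp (-(k*a))*Real.exp (-(k*a)) :=
            mul_le_mul_of_nonneg_right hρs hepos.le
        _ = Real.exp (-(k*a))^2 := (sq _).symm
      rw [hse, hu] at h1'
      linarith
    have hueq : u = ε * Real.exp (-(4*(a/β)*ρ)) := by
      rw [hu_def, hε_def, ← Real.exp_add]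
      congr 1
      rw [hρ_def]
      field_simp
      ring
    have hf2 : u * (1 + 4*(a/β)*ρ) ≤ ε := by
      rw [hueq]
      have h1' : Real.exp (-(4*(a/β)*ρ)) * (1 + 4*(a/β)*ρ) ≤ 1 := by
        have ha1 : 1 + 4*(a/β)*ρ ≤ Real.exp (4*(a/β)*ρ) := by
          have := Real.add_one_le_exp (4*(a/β)*ρ); linarith
        have ha2 : Real.exp (-(4*(a/β)*ρ)) * Real.exp (4*(a/β)*ρ) = 1 := by
          rw [← Real.exp_add]; simp
        calc Real.exp (-(4*(a/β)*ρ)) * (1 + 4*(a/β)*ρ)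
            ≤ Real.exp (-(4*(a/β)*ρ)) * Real.exp (4*(a/β)*ρ) :=
              mul_le_mul_of_nonneg_left ha1 (Real.exp_pos _).le
        _ = 1 := ha2
      calc ε * Real.exp (-(4*(a/β)*ρ)) * (1 + 4*(a/β)*ρ)
          = ε * (Real.exp (-(4*(a/β)*ρ)) * (1 + 4*(a/β)*ρ)) := by ring
      _ ≤ ε * 1 := mul_le_mul_of_nonneg_left h1' hεpos.le
      _ = ε := mul_one ε
    have f2 : u * (1 + 8*ρ) ≤ ε := by
      have h48 : (0:ℝ) ≤ 4*(a/β) - 8 := by linarith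
      have h49 := mul_nonneg (mul_nonneg hupos.le hρ.le) h48
      linarith [hf2, h49]
    have huε : u ≤ ε := by
      rw [hueq]
      have h1' : Real.exp (-(4*(a/β)*ρ)) ≤ 1 := by
        rw [Real.exp_le_one_iff]
        have : 0 ≤ 4*(a/β)*ρ := by positivity
        linarith
      calc ε * Real.exp (-(4*(a/β)*ρ)) ≤ ε * 1 :=
            mul_le_mul_of_nonneg_left h1' hεpos.le
      _ = ε := mul_one ε
    have key : 2*ρ + ρ^2 ≤ 4*ε :=
      key_poly_ineq ρ u ε hρ hupos hεpos hε1 huε f1 f2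
    have hkβ : k*β = 2*(1+ρ) := by rw [hρ_def]; ring
    have hksq : k^2*β^2 = 4 + 4*(2*ρ+ρ^2) := by
      have : (k*β)^2 = (2*(1+ρ))^2 := by rw [hkβ]
      linarith [this]
    have h1 : k^2 ≤ (4+16*ε)/β^2 := by
      rw [le_div_iff₀ hβ2]; linarith [key, hksq]
    have h2 : (4+16*ε)/β^2 = 4/β^2 + 16/β^2*ε := by ring
    rw [h2] at h1
    ring_nf at h1 ⊢
    linarith
end

section
/- Let β > 0 and consider the quadratic form on H¹((−a,0) ∪ (0,a)) (Neumann at ±a) given by q(f) = ∫_{−a}^{a}|f'|² − β⁻¹|f(0⁺) − f(0⁻)|². Then q is bounded below by t₋‖f‖², where t₋ ≥ −4/β² − (16/β²)e^{−4a/β} for a/β > 2 and β small; in particular q(f) ≥ (−4/β² − 16β³/β²)‖f‖² when a = −(3/4)β ln β. -/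
/-!
On `[0, a]`, for any weight `w` with `w² - w' ≤ k²`, integrating `(f²w)' = 2ff'w + w'f²` against
`0 ≤ (f' + wf)²` bounds the boundary term `f(0)² w(0) - f(a)² w(a)` by `∫ f'² + k² ∫ f²`. The
weight `w(x) = k tanh(k(a - x))` solves the Riccati equation `w² - w' = k²` and vanishes at the
Neumann end, giving the sharp trace bound `k tanh(ka) f(0)² ≤ ∫ f'² + k² ∫ f²`, and likewise on
`[-a, 0]`. Since `β⁻¹ (f(0) - g(0))² ≤ (2/β)(f(0)² + g(0)²)`, the form is at least `-k² ‖·‖²` as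
soon as `2/β ≤ k tanh(ka)`. With `k = (2/β) √(1 + 4e^{-4a/β})` this holds for `a/β ≥ 2`, and
`k² = 4/β² + (16/β²) e^{-4a/β}`.
-/

open Real MeasureTheory Set

namespace Real

theorem hasDerivAt_tanh (x : ℝ) : HasDerivAt tanh (1 - tanh x ^ 2) x := by
  have h := (hasDerivAt_sinh x).div (hasDerivAt_cosh x) (cosh_pos x).ne'
  rw [show sinh / cosh = tanh from funext fun y => (tanh_eq_sinh_div_cosh y).symm] at h
  refine h.congr_deriv ?_
  rw [tanh_eq_sinh_div_cosh]
  field_simp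

theorem continuous_tanh : Continuous tanh :=
  continuous_iff_continuousAt.2 fun x => (hasDerivAt_tanh x).continuousAt

theorem one_sub_two_mul_exp_neg_le_tanh (x : ℝ) : 1 - 2 * exp (-2 * x) ≤ tanh x := by
  have hx := exp_pos x
  have hexp : exp (-2 * x) = (exp x ^ 2)⁻¹ := by
    rw [← exp_nat_mul, ← exp_neg]; ring_nf
  rw [tanh_eq_sinh_div_cosh, le_div_iff₀ (cosh_pos x), sinh_eq, cosh_eq, exp_neg, hexp]
  field_simp
  nlinarith [pow_pos hx 2]

end Real

theorem hasDerivAt_neg_mul_tanh (k e x : ℝ) :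
    HasDerivAt (fun y => -k * tanh (k * (y - e))) (k ^ 2 * (tanh (k * (x - e)) ^ 2 - 1)) x := by
  have h := ((hasDerivAt_tanh (k * (x - e))).comp x
    (((hasDerivAt_id x).sub_const e).const_mul k)).const_mul (-k)
  exact h.congr_deriv (by ring)

theorem integrableOn_mul_deriv_of_integrableOn_sq {f : ℝ → ℝ} {s : Set ℝ} (hf : Continuous f)
    (hf' : IntegrableOn (fun x => deriv f x ^ 2) s)
    (hf0 : IntegrableOn (fun x => f x ^ 2) s) :
    IntegrableOn (fun x => f x * deriv f x) s := by
  refine (hf0.add hf').mono' ((hf.measurable.mul (measurable_deriv f)).aestronglyMeasurable) ?_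
  refine Filter.Eventually.of_forall fun x => ?_
  rw [Real.norm_eq_abs, abs_mul, Pi.add_apply]
  nlinarith [sq_abs (f x), sq_abs (deriv f x), sq_nonneg (|f x| - |deriv f x|)]

theorem sq_mul_sub_sq_mul_le_of_riccati {f w w' : ℝ → ℝ} {c d k : ℝ} (hcd : c ≤ d)
    (hf : Differentiable ℝ f) (hw : ∀ x, HasDerivAt w (w' x) x) (hw' : Continuous w')
    (hric : ∀ x, w x ^ 2 - w' x ≤ k ^ 2)
    (hf' : IntegrableOn (fun x => deriv f x ^ 2) (Ioo c d))
    (hf0 : IntegrableOn (fun x => f x ^ 2) (Ioo c d)) :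
    f c ^ 2 * w c - f d ^ 2 * w d
      ≤ (∫ x in Ioo c d, deriv f x ^ 2) + k ^ 2 * ∫ x in Ioo c d, f x ^ 2 := by
  set F' := fun x => 2 * (f x * deriv f x) * w x + f x ^ 2 * w' x
  have hF : ∀ x, HasDerivAt (fun y => f y ^ 2 * w y) (F' x) x := fun x =>
    (((hf x).hasDerivAt.fun_pow 2).mul (hw x)).congr_deriv (by simp only [F']; push_cast; ring)
  have hwc : Continuous w := continuous_iff_continuousAt.2 fun x => (hw x).continuousAt
  have hF'int : IntegrableOn F' (Ioo c d) := by
    have h1 : IntegrableOn (fun x => 2 * (f x * deriv f x) * w x) (Ioo c d) :=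
      IntegrableOn.mul_continuousOn_of_subset
        ((integrableOn_mul_deriv_of_integrableOn_sq hf.continuous hf' hf0).const_mul 2)
        hwc.continuousOn measurableSet_Ioo isCompact_Icc Ioo_subset_Icc_self
    have h2 : IntegrableOn (fun x => f x ^ 2 * w' x) (Ioo c d) :=
      hf0.mul_continuousOn_of_subset hw'.continuousOn measurableSet_Ioo isCompact_Icc
        Ioo_subset_Icc_self
    exact h1.add h2
  have hFTC : ∫ x in Ioo c d, F' x = f d ^ 2 * w d - f c ^ 2 * w c := by
    rw [← integral_Ioc_eq_integral_Ioo, ← intervalIntegral.integral_of_le hcd]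
    exact intervalIntegral.integral_eq_sub_of_hasDerivAt (fun x _ => hF x)
      ((intervalIntegrable_iff_integrableOn_Ioo_of_le hcd).2 hF'int)
  have hpt : ∀ x, -F' x ≤ deriv f x ^ 2 + k ^ 2 * f x ^ 2 := fun x => by
    nlinarith [sq_nonneg (deriv f x + w x * f x), hric x, sq_nonneg (f x)]
  calc f c ^ 2 * w c - f d ^ 2 * w d = ∫ x in Ioo c d, -F' x := by
        rw [integral_neg, hFTC]; ring
    _ ≤ ∫ x in Ioo c d, (deriv f x ^ 2 + k ^ 2 * f x ^ 2) :=
        integral_mono hF'int.neg (Integrable.fun_add hf' (hf0.const_mul _)) hpt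
    _ = _ := by rw [integral_add hf' (hf0.const_mul _), integral_const_mul]

theorem sq_left_endpoint_mul_tanh_le {f : ℝ → ℝ} {c d : ℝ} (k : ℝ) (hcd : c ≤ d)
    (hf : Differentiable ℝ f) (hf' : IntegrableOn (fun x => deriv f x ^ 2) (Ioo c d))
    (hf0 : IntegrableOn (fun x => f x ^ 2) (Ioo c d)) :
    f c ^ 2 * (k * tanh (k * (d - c)))
      ≤ (∫ x in Ioo c d, deriv f x ^ 2) + k ^ 2 * ∫ x in Ioo c d, f x ^ 2 := by
  have h := sq_mul_sub_sq_mul_le_of_riccati hcd hf (hasDerivAt_neg_mul_tanh k d)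
    (by have := continuous_tanh; fun_prop) (fun x => (by ring : _ = k ^ 2).le) hf' hf0
  rwa [sub_self, mul_zero, tanh_zero, mul_zero, mul_zero, sub_zero,
    show k * (c - d) = -(k * (d - c)) by ring, tanh_neg, mul_neg, neg_mul, neg_neg] at h

theorem sq_right_endpoint_mul_tanh_le {f : ℝ → ℝ} {c d : ℝ} (k : ℝ) (hcd : c ≤ d)
    (hf : Differentiable ℝ f) (hf' : IntegrableOn (fun x => deriv f x ^ 2) (Ioo c d))
    (hf0 : IntegrableOn (fun x => f x ^ 2) (Ioo c d)) :
    f d ^ 2 * (k * tanh (k * (d - c)))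
      ≤ (∫ x in Ioo c d, deriv f x ^ 2) + k ^ 2 * ∫ x in Ioo c d, f x ^ 2 := by
  have h := sq_mul_sub_sq_mul_le_of_riccati hcd hf (hasDerivAt_neg_mul_tanh k c)
    (by have := continuous_tanh; fun_prop) (fun x => (by ring : _ = k ^ 2).le) hf' hf0
  rwa [sub_self, mul_zero, tanh_zero, mul_zero, mul_zero, zero_sub, neg_mul, mul_neg,
    neg_neg] at h

theorem one_le_sqrt_mul_tanh {s : ℝ} (hs : 2 ≤ s) :
    1 ≤ √(1 + 4 * exp (-4 * s)) * tanh (2 * s * √(1 + 4 * exp (-4 * s))) := by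
  set E := exp (-4 * s)
  set r := √(1 + 4 * E)
  have hE : 0 < E := exp_pos _
  have hE1 : E ≤ 1 := exp_le_one_iff.2 (by linarith)
  have hr_sq : r ^ 2 = 1 + 4 * E := sq_sqrt (by positivity)
  have hr1 : 1 ≤ r := one_le_sqrt.2 (by linarith)
  have hr3 : r ≤ 3 := by nlinarith
  -- `exp (-4 s r) = E exp (-4 s (r - 1))` and `exp (4 s (r - 1)) ≥ 1 + 8 (r - 1)`
  have hu : exp (-2 * (2 * s * r)) * (1 + 8 * (r - 1)) ≤ E := by
    have hsplit : exp (-2 * (2 * s * r)) * exp (4 * s * (r - 1)) = E := by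
      rw [← exp_add]; congr 1; ring
    have hlin : 1 + 8 * (r - 1) ≤ exp (4 * s * (r - 1)) := by
      nlinarith [add_one_le_exp (4 * s * (r - 1))]
    rw [← hsplit]
    exact mul_le_mul_of_nonneg_left hlin (exp_pos _).le
  have htanh := one_sub_two_mul_exp_neg_le_tanh (2 * s * r)
  set u := exp (-2 * (2 * s * r))
  have hu0 : 0 < u := exp_pos _
  -- with `x = r - 1` and `E = x (x + 2) / 4`, the goal `2 r u ≤ x` reduces to `x ≤ 13`
  nlinarith [mul_le_mul_of_nonneg_left hu (by linarith : (0:ℝ) ≤ 2 * r),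
    mul_nonneg (sub_nonneg.2 hr1) (sub_nonneg.2 hr3)]

theorem two_div_le_mul_tanh {β a : ℝ} (hβ : 0 < β) (hab : 2 ≤ a / β) :
    2 / β ≤ 2 / β * √(1 + 4 * exp (-4 * a / β))
      * tanh (2 / β * √(1 + 4 * exp (-4 * a / β)) * a) := by
  have h := one_le_sqrt_mul_tanh hab
  rw [← mul_div_assoc] at h
  calc 2 / β = 2 / β * 1 := (mul_one _).symm
    _ ≤ 2 / β * (√(1 + 4 * exp (-4 * a / β))
          * tanh (2 * (a / β) * √(1 + 4 * exp (-4 * a / β)))) := by gcongr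
    _ = _ := by ring_nf

theorem deltaPrime_form_ge_of_two_div_le_mul_tanh {β a k : ℝ} {f g : ℝ → ℝ} (hβ : 0 < β)
    (ha : 0 ≤ a) (hk : 2 / β ≤ k * tanh (k * a)) (hf : Differentiable ℝ f)
    (hg : Differentiable ℝ g)
    (hf' : IntegrableOn (fun u => deriv f u ^ 2) (Ioo 0 a))
    (hg' : IntegrableOn (fun u => deriv g u ^ 2) (Ioo (-a) 0))
    (hf0 : IntegrableOn (fun u => f u ^ 2) (Ioo 0 a))
    (hg0 : IntegrableOn (fun u => g u ^ 2) (Ioo (-a) 0)) :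
    -k ^ 2 * ((∫ u in Ioo 0 a, f u ^ 2) + ∫ u in Ioo (-a) 0, g u ^ 2)
      ≤ (∫ u in Ioo 0 a, deriv f u ^ 2) + (∫ u in Ioo (-a) 0, deriv g u ^ 2)
        - β⁻¹ * (f 0 - g 0) ^ 2 := by
  have htf := sq_left_endpoint_mul_tanh_le k ha hf hf' hf0
  have htg := sq_right_endpoint_mul_tanh_le k (neg_nonpos.2 ha) hg hg' hg0
  rw [sub_zero] at htf
  rw [zero_sub, neg_neg] at htg
  have hjump : β⁻¹ * (f 0 - g 0) ^ 2 ≤ 2 / β * (f 0 ^ 2 + g 0 ^ 2) := by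
    rw [div_eq_mul_inv, mul_comm 2, mul_assoc]
    gcongr
    nlinarith [sq_nonneg (f 0 + g 0)]
  nlinarith [mul_le_mul_of_nonneg_right hk (by positivity : 0 ≤ f 0 ^ 2 + g 0 ^ 2)]

/-- Lower bound for the 1D δ' transversal quadratic form with Neumann ends: for
`a/β > 2` and `β` small, representing an element of `H¹((-a,0) ∪ (0,a))` by its
right part `f` and left part `g`,
`∫₀^a |f'|² + ∫_{-a}^0 |g'|² - β⁻¹ |f(0) - g(0)|²
  ≥ (-4/β² - (16/β²) e^{-4a/β}) (∫₀^a |f|² + ∫_{-a}^0 |g|²)`;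
in particular with `a = -(3/4) β ln β` the constant equals `-4/β² - 16β`. -/
theorem delta_prime_form_lower_bound :
    ∃ β₀ : ℝ, 0 < β₀ ∧ ∀ β a : ℝ, 0 < β → β < β₀ → a / β > 2 →
      ∀ f g : ℝ → ℝ, Differentiable ℝ f → Differentiable ℝ g →
      IntegrableOn (fun u => (deriv f u)^2) (Set.Ioo 0 a) volume →
      IntegrableOn (fun u => (deriv g u)^2) (Set.Ioo (-a) 0) volume →
      IntegrableOn (fun u => (f u)^2) (Set.Ioo 0 a) volume →
      IntegrableOn (fun u => (g u)^2) (Set.Ioo (-a) 0) volume →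
      ((∫ u in Set.Ioo 0 a, (deriv f u)^2) + (∫ u in Set.Ioo (-a) 0, (deriv g u)^2)
          - β⁻¹ * (f 0 - g 0)^2
        ≥ (-4/β^2 - (16/β^2) * Real.exp (-4*a/β)) *
          ((∫ u in Set.Ioo 0 a, (f u)^2) + ∫ u in Set.Ioo (-a) 0, (g u)^2)) ∧
      (a = -(3/4) * β * Real.log β →
        (∫ u in Set.Ioo 0 a, (deriv f u)^2) + (∫ u in Set.Ioo (-a) 0, (deriv g u)^2)
            - β⁻¹ * (f 0 - g 0)^2
          ≥ (-4/β^2 - 16 * β^3 / β^2) *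
            ((∫ u in Set.Ioo 0 a, (f u)^2) + ∫ u in Set.Ioo (-a) 0, (g u)^2)) := by
  refine ⟨1, one_pos, fun β a hβ _ hab f g hf hg hf' hg' hf0 hg0 => ?_⟩
  have ha : 0 ≤ a := by linarith [(lt_div_iff₀ hβ).1 hab]
  have hform := deltaPrime_form_ge_of_two_div_le_mul_tanh hβ ha
    (two_div_le_mul_tanh hβ hab.le) hf hg hf' hg' hf0 hg0
  rw [mul_pow, sq_sqrt (by positivity)] at hform
  have hbound : -4 / β ^ 2 - 16 / β ^ 2 * exp (-4 * a / β)
      = -((2 / β) ^ 2 * (1 + 4 * exp (-4 * a / β))) := by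
    ring
  refine ⟨hbound ▸ hform, fun ha_eq => ?_⟩
  have hexp : exp (-4 * a / β) = β ^ 3 := by
    rw [ha_eq, show -4 * (-(3 / 4) * β * log β) / β = 3 * log β by field_simp,
      show 3 * log β = log (β ^ 3) by rw [log_pow]; norm_num, exp_log (by positivity)]
  rw [show 16 * β ^ 3 / β ^ 2 = 16 / β ^ 2 * exp (-4 * a / β) by rw [hexp]; ring, hbound]
  exact hform
end
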